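/- arXiv:math/9911182 — 2 statements merged into one kernel-verified Lean document; each statement's English description precedes it below -/
import Mathlib

section
/- Let A be self-adjoint compact, B nonnegative compact, J self-adjoint bounded with bounded inverse, and assume 0 ∈ ρ(J⁻¹ + A + iB). Define the unitary operator S = I − 2i B^{1/2}(J⁻¹ + A + iB)⁻¹ B^{1/2}. Then for every θ ∈ (0,2π): dim Ker(S − e^{iθ}I) = dim Ker(J⁻¹ + A + cot(θ/2)·B). -/
/-!
With `μ = e^{iθ}` and `α = i - cot(θ/2)` one has `(1 - μ) α = 2i`, hence, writing
`T = J⁻¹ + A + iB` and `M = α R sB`,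
`S - μ = (1 - μ) (1 - sB M)` and `J⁻¹ + A + cot(θ/2) B = T (1 - M sB)`.
As `1 - μ ≠ 0` and `T` is injective, the two kernels are those of `1 - sB M` and `1 - M sB`,
and `sB`, `M` restrict to mutually inverse isomorphisms between them.
-/

namespace LinearMap

variable {R M N : Type*} [Ring R] [AddCommGroup M] [AddCommGroup N] [Module R M] [Module R N]

theorem mem_ker_one_sub {f : Module.End R M} {x : M} : x ∈ ker (1 - f) ↔ f x = x := by
  rw [mem_ker, sub_apply, Module.End.one_apply, sub_eq_zero, eq_comm]

def kerOneSubCompEquiv (X : N →ₗ[R] M) (Y : M →ₗ[R] N) :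
    ker (1 - X ∘ₗ Y) ≃ₗ[R] ker (1 - Y ∘ₗ X) :=
  LinearEquiv.ofLinearMap
    (Y.restrict fun _ hx => mem_ker_one_sub.2 <| congrArg Y (mem_ker_one_sub.1 hx))
    (X.restrict fun _ hy => mem_ker_one_sub.2 <| congrArg X (mem_ker_one_sub.1 hy))
    (by ext ⟨y, hy⟩; exact mem_ker_one_sub.1 hy)
    (by ext ⟨x, hx⟩; exact mem_ker_one_sub.1 hx)

theorem ker_comp_of_leftInverse {P : Type*} [AddCommGroup P] [Module R P] (f : M →ₗ[R] N)
    {g : N →ₗ[R] P} {h : P →ₗ[R] N} (hgh : h ∘ₗ g = id) : ker (g ∘ₗ f) = ker f :=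
  ker_comp_of_ker_eq_bot f (ker_eq_bot_of_inverse hgh)

end LinearMap

open Complex in
theorem Complex.one_sub_exp_mul_I_mul_I_sub_cot {θ : ℝ} (h : Real.sin (θ / 2) ≠ 0) :
    (1 - exp (θ * I)) * (I - (Real.cos (θ / 2) / Real.sin (θ / 2) : ℝ)) = 2 * I := by
  have hw : exp (θ * I) = (Real.cos (θ / 2) + Real.sin (θ / 2) * I) ^ 2 := by
    rw [ofReal_cos, ofReal_sin, ← exp_mul_I, ← exp_nat_mul]
    push_cast; ring_nf
  have hpyth : (Real.sin (θ / 2) : ℂ) ^ 2 + (Real.cos (θ / 2) : ℂ) ^ 2 = 1 := by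
    exact_mod_cast Real.sin_sq_add_cos_sq (θ / 2)
  have hs : (Real.sin (θ / 2) : ℂ) ≠ 0 := by exact_mod_cast h
  rw [hw, ofReal_div]
  generalize (Real.sin (θ / 2) : ℂ) = s at *
  generalize (Real.cos (θ / 2) : ℂ) = c at *
  field_simp
  linear_combination (s * I + c) * hpyth - (c * s ^ 2 + s ^ 3 * I) * I_sq

variable {K : Type*} [NormedAddCommGroup K] [InnerProductSpace ℂ K] [CompleteSpace K]

open Complex ContinuousLinearMap in
theorem stmt9_general (A B J' sB R : K →L[ℂ] K)
    (hsB2 : sB * sB = B)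
    (hR : (J' + A + Complex.I • B) * R = 1) (hR' : R * (J' + A + Complex.I • B) = 1)
    (θ : ℝ) (hθ : θ ∈ Set.Ioo 0 (2 * Real.pi)) :
    Module.rank ℂ (LinearMap.ker
        ((((1 - (2 * Complex.I) • (sB * R * sB)) -
          Complex.exp ((θ : ℂ) * Complex.I) • (1 : K →L[ℂ] K)) : K →L[ℂ] K) : K →ₗ[ℂ] K)) =
      Module.rank ℂ (LinearMap.ker
        (((J' + A + (Real.cos (θ / 2) / Real.sin (θ / 2)) • B : K →L[ℂ] K) : K →ₗ[ℂ] K))) := by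
  have hsin : Real.sin (θ / 2) ≠ 0 :=
    (Real.sin_pos_of_pos_of_lt_pi (by linarith [hθ.1]) (by linarith [hθ.2])).ne'
  set μ := exp (θ * I)
  set t := Real.cos (θ / 2) / Real.sin (θ / 2)
  set T := J' + A + I • B with hT_def
  set α : ℂ := I - t
  set M := α • (R * sB)
  have hμα : (1 - μ) * α = 2 * I := one_sub_exp_mul_I_mul_I_sub_cot hsin
  have hμ : 1 - μ ≠ 0 := left_ne_zero_of_mul (by rw [hμα]; simp)
  have hS : (1 - (2 * I) • (sB * R * sB)) - μ • 1 = (1 - μ) • (1 - sB * M) := by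
    rw [smul_sub, mul_smul_comm, smul_smul, hμα, sub_smul, one_smul, mul_assoc]; abel
  have hT : J' + A + t • B = T * (1 - M * sB) := by
    rw [mul_sub, mul_one, smul_mul_assoc, mul_smul_comm, mul_assoc, hsB2, ← mul_assoc, hR, one_mul,
      ← Complex.coe_smul, sub_smul, hT_def]
    abel
  have hRT : (R : K →ₗ[ℂ] K) ∘ₗ T = LinearMap.id := by
    rw [← Module.End.mul_eq_comp, ← toLinearMap_mul, hR', toLinearMap_one, Module.End.one_eq_id]
  rw [hS, hT, toLinearMap_smul, LinearMap.ker_smul _ _ hμ, toLinearMap_mul, Module.End.mul_eq_comp,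
    LinearMap.ker_comp_of_leftInverse _ hRT]
  simp only [toLinearMap_sub, toLinearMap_one, toLinearMap_mul, Module.End.mul_eq_comp]
  exact (LinearMap.kerOneSubCompEquiv _ _).rank_eq

/-- Let `A` be compact self-adjoint, `B ≥ 0` compact with positive square root `sB`,
`J` self-adjoint with bounded inverse `J'`, and let `R = (J⁻¹ + A + iB)⁻¹` (so
`0 ∈ ρ(J⁻¹ + A + iB)`). For `S = I - 2i sB R sB` and every `θ ∈ (0, 2π)`:
`dim Ker(S - e^{iθ} I) = dim Ker(J⁻¹ + A + cot(θ/2) B)`. -/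
theorem stmt9 (A B J J' sB R : K →L[ℂ] K)
    (hA : IsSelfAdjoint A) (hAc : IsCompactOperator A)
    (hBc : IsCompactOperator B) (hB : B.IsPositive)
    (hJ : IsSelfAdjoint J) (hJJ' : J * J' = 1) (hJ'J : J' * J = 1)
    (hsB : sB.IsPositive) (hsB2 : sB * sB = B)
    (hR : (J' + A + Complex.I • B) * R = 1) (hR' : R * (J' + A + Complex.I • B) = 1)
    (θ : ℝ) (hθ : θ ∈ Set.Ioo 0 (2 * Real.pi)) :
    Module.rank ℂ (LinearMap.ker
        ((((1 - (2 * Complex.I) • (sB * R * sB)) -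
          Complex.exp ((θ : ℂ) * Complex.I) • (1 : K →L[ℂ] K)) : K →L[ℂ] K) : K →ₗ[ℂ] K)) =
      Module.rank ℂ (LinearMap.ker
        (((J' + A + (Real.cos (θ / 2) / Real.sin (θ / 2)) • B : K →L[ℂ] K) : K →ₗ[ℂ] K))) :=
  stmt9_general A B J' sB R hsB2 hR hR' θ hθ
end

section
/- Under the hypotheses of the previous statement, S is unitary: the operator S = I − 2i B^{1/2}(J⁻¹ + A + iB)⁻¹ B^{1/2} satisfies S*S = SS* = I. -/
variable {K : Type*} [NormedAddCommGroup K] [InnerProductSpace ℂ K] [CompleteSpace K]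

/-- Under the hypotheses of the previous statement (`A` compact self-adjoint, `B ≥ 0`
compact with positive square root `sB`, `J` self-adjoint boundedly invertible with
inverse `J'`, `R = (J⁻¹ + A + iB)⁻¹`), the operator
`S = I - 2i sB R sB` is unitary: `S* S = S S* = I`. -/
theorem stmt10 (A B J J' sB R : K →L[ℂ] K)
    (hA : IsSelfAdjoint A) (hAc : IsCompactOperator A)
    (hBc : IsCompactOperator B) (hB : B.IsPositive)
    (hJ : IsSelfAdjoint J) (hJJ' : J * J' = 1) (hJ'J : J' * J = 1)
    (hsB : sB.IsPositive) (hsB2 : sB * sB = B)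
    (hR : (J' + A + Complex.I • B) * R = 1) (hR' : R * (J' + A + Complex.I • B) = 1) :
    star (1 - (2 * Complex.I) • (sB * R * sB)) * (1 - (2 * Complex.I) • (sB * R * sB)) = 1 ∧
    (1 - (2 * Complex.I) • (sB * R * sB)) * star (1 - (2 * Complex.I) • (sB * R * sB)) = 1 := by
  set c : ℂ := 2 * Complex.I with hc
  set T : K →L[ℂ] K := J' + A + Complex.I • B with hTdef
  have hsA : star A = A := hA
  have hBsa : star B = B := hB.isSelfAdjoint
  have hsBsa : star sB = sB := hsB.isSelfAdjoint
  have hJsa : star J = J := hJ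
  have hJ'sa : star J' = J' := by
    have h1 : star J' * J = 1 := by
      calc star J' * J = star (J * J') := by rw [star_mul, hJsa]
        _ = 1 := by rw [hJJ']; simp
    calc star J' = star J' * (J * J') := by rw [hJJ', mul_one]
      _ = (star J' * J) * J' := by rw [mul_assoc]
      _ = J' := by rw [h1, one_mul]
  have hconjc : star c = -c := by
    rw [hc, Complex.star_def, map_mul, Complex.conj_I, Complex.conj_ofNat]
    ring
  have hcc : c * c = -4 := by
    rw [hc]; ring_nf; rw [Complex.I_sq]; ring
  have hTs : star T = J' + A - Complex.I • B := by
    rw [hTdef]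
    simp [star_add, star_smul, hsA, hBsa, hJ'sa, Complex.conj_I, sub_eq_add_neg,
      neg_smul]
  have hdiff : T - star T = c • B := by
    rw [hTs, hTdef, hc]
    module
  have hRs : star R * star T = 1 := by rw [← star_mul, hR, star_one]
  have hRs' : star T * star R = 1 := by rw [← star_mul, hR', star_one]
  -- key identities
  have k1 : star R - R = c • (star R * B * R) := by
    have e : star R - R = star R * (T - star T) * R := by
      calc star R - R = star R * (T * R) - (star R * star T) * R := by
            rw [hR, hRs, mul_one, one_mul]
        _ = star R * (T - star T) * R := by noncomm_ring
    rw [e, hdiff, mul_smul_comm, smul_mul_assoc]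
  have k2 : star R - R = c • (R * B * star R) := by
    have e : star R - R = R * (T - star T) * star R := by
      calc star R - R = (R * T) * star R - R * (star T * star R) := by
            rw [hR', hRs', mul_one, one_mul]
        _ = R * (T - star T) * star R := by noncomm_ring
    rw [e, hdiff, mul_smul_comm, smul_mul_assoc]
  set U : K →L[ℂ] K := sB * R * sB with hU
  set V : K →L[ℂ] K := sB * star R * sB with hV
  have hstarU : star U = V := by
    rw [hU, hV, star_mul, star_mul, hsBsa]
    noncomm_ring
  have hstarV : star V = U := by
    rw [hU, hV, star_mul, star_mul, hsBsa, star_star]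
    noncomm_ring
  have hVU : V * U = sB * (star R * B * R) * sB := by
    rw [hU, hV, ← hsB2]
    noncomm_ring
  have hUV : U * V = sB * (R * B * star R) * sB := by
    rw [hU, hV, ← hsB2]
    noncomm_ring
  have hVsubU1 : V - U = c • (sB * (star R * B * R) * sB) := by
    have : V - U = sB * (star R - R) * sB := by rw [hU, hV]; noncomm_ring
    rw [this, k1, mul_smul_comm, smul_mul_assoc]
  have hVsubU2 : V - U = c • (sB * (R * B * star R) * sB) := by
    have : V - U = sB * (star R - R) * sB := by rw [hU, hV]; noncomm_ring
    rw [this, k2, mul_smul_comm, smul_mul_assoc]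
  have hstarS : star (1 - c • U) = 1 + c • V := by
    rw [star_sub, star_smul, hstarU, star_one, hconjc]
    module
  constructor
  · rw [hstarS]
    have expand : (1 + c • V) * (1 - c • U)
        = 1 + c • (V - U) - (c * c) • (V * U) := by
      simp only [mul_sub, add_mul, smul_mul_assoc, mul_smul_comm, smul_smul,
        mul_one, one_mul]
      module
    rw [expand, hVsubU1, hVU, smul_smul, hcc]
    module
  · rw [hstarS]
    have expand : (1 - c • U) * (1 + c • V)
        = 1 + c • (V - U) - (c * c) • (U * V) := by
      simp only [mul_sub, mul_add, sub_mul, add_mul, smul_mul_assoc, mul_smul_comm,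
        smul_smul, mul_one, one_mul]
      module
    rw [expand, hVsubU2, hUV, smul_smul, hcc]
    module
end
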